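/- arXiv:1310.2900 — 4 statements merged into one kernel-verified Lean document; each statement's English description precedes it below -/
import Mathlib

section
/- The kernel of the Laplacian Δ on M_n(ℂ) consists exactly of the scalar multiples of the identity matrix: Δ(a) = 0 if and only if a = λ·1 for some λ ∈ ℂ. -/
open Matrix
open scoped ComplexOrder

/-- The derivation `δ₁(a) = ya − ay`. -/
noncomputable def delta1 {n : ℕ} (y a : Matrix (Fin n) (Fin n) ℂ) : Matrix (Fin n) (Fin n) ℂ :=
  y * a - a * y

/-- The derivation `δ₂(a) = ax − xa`. -/
noncomputable def delta2 {n : ℕ} (x a : Matrix (Fin n) (Fin n) ℂ) : Matrix (Fin n) (Fin n) ℂ :=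
  a * x - x * a

/-- The Laplacian `Δ = δ₁∘δ₁ + δ₂∘δ₂`. -/
noncomputable def lap {n : ℕ} (x y a : Matrix (Fin n) (Fin n) ℂ) : Matrix (Fin n) (Fin n) ℂ :=
  delta1 y (delta1 y a) + delta2 x (delta2 x a)

/-- The logarithm of a positive definite (in particular Hermitian) matrix, via the
functional calculus: unitarily diagonalize and take the real logarithm of the eigenvalues. -/
noncomputable def matLog {n : ℕ} (a : Matrix (Fin n) (Fin n) ℂ) : Matrix (Fin n) (Fin n) ℂ :=
  if h : a.IsHermitian then
    (h.eigenvectorUnitary : Matrix (Fin n) (Fin n) ℂ) *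
      Matrix.diagonal (fun i => (Real.log (h.eigenvalues i) : ℂ)) *
      (star (h.eigenvectorUnitary : Matrix (Fin n) (Fin n) ℂ))
  else 0

/-- The generating condition: the only matrices commuting with both `u = exp((2πi/n)x)`
and `v = exp((2πi/n)y)` are the scalar multiples of the identity matrix. -/
def GenCond {n : ℕ} (x y : Matrix (Fin n) (Fin n) ℂ) : Prop :=
  ∀ a : Matrix (Fin n) (Fin n) ℂ,
    a * NormedSpace.exp ((((2 * Real.pi : ℝ) : ℂ) * Complex.I / (n : ℂ)) • x)
      = NormedSpace.exp ((((2 * Real.pi : ℝ) : ℂ) * Complex.I / (n : ℂ)) • x) * a →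
    a * NormedSpace.exp ((((2 * Real.pi : ℝ) : ℂ) * Complex.I / (n : ℂ)) • y)
      = NormedSpace.exp ((((2 * Real.pi : ℝ) : ℂ) * Complex.I / (n : ℂ)) • y) * a →
    ∃ z : ℂ, a = z • (1 : Matrix (Fin n) (Fin n) ℂ)

/-
Pair the Laplacian with `a` under the Hilbert–Schmidt form `⟨b, c⟩ = tr (bᴴ c)`. Since `x` and
`y` are Hermitian, `ad x` and `ad y` are self-adjoint for this form, so
`⟨a, Δa⟩ = ‖[y, a]‖² + ‖[x, a]‖²`. Hence `Δa = 0` forces `a` to commute with `x` and `y`, so with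
`exp(2πi x / n)` and `exp(2πi y / n)`, and the generating condition makes `a` scalar.
-/

namespace Matrix

variable {ι R : Type*} [Fintype ι] [CommRing R] [StarRing R]

lemma IsHermitian.conjTranspose_lie {y : Matrix ι ι R} (hy : y.IsHermitian) (a : Matrix ι ι R) :
    ⁅y, a⁆ᴴ = ⁅aᴴ, y⁆ := by
  simp only [Ring.lie_def, conjTranspose_sub, conjTranspose_mul, hy.eq]

lemma IsHermitian.trace_conjTranspose_mul_lie_lie {y : Matrix ι ι R} (hy : y.IsHermitian)
    (a : Matrix ι ι R) : (aᴴ * ⁅y, ⁅y, a⁆⁆).trace = (⁅y, a⁆ᴴ * ⁅y, a⁆).trace := by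
  rw [hy.conjTranspose_lie]
  simp only [Ring.lie_def, mul_sub, sub_mul, trace_sub, mul_assoc]
  rw [trace_mul_comm y (aᴴ * (y * a)), trace_mul_comm y (aᴴ * (a * y))]
  simp only [mul_assoc]

variable [PartialOrder R] [StarOrderedRing R] [NoZeroDivisors R]

lemma IsHermitian.lie_lie_add_lie_lie_eq_zero_iff {x y : Matrix ι ι R} (hx : x.IsHermitian)
    (hy : y.IsHermitian) (a : Matrix ι ι R) :
    ⁅x, ⁅x, a⁆⁆ + ⁅y, ⁅y, a⁆⁆ = 0 ↔ ⁅x, a⁆ = 0 ∧ ⁅y, a⁆ = 0 := by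
  refine ⟨fun h => ?_, fun ⟨hxa, hya⟩ => by simp [hxa, hya, Ring.lie_def]⟩
  have hsum : (⁅x, a⁆ᴴ * ⁅x, a⁆).trace + (⁅y, a⁆ᴴ * ⁅y, a⁆).trace = 0 := by
    rw [← hx.trace_conjTranspose_mul_lie_lie, ← hy.trace_conjTranspose_mul_lie_lie, ← trace_add,
      ← mul_add, h, mul_zero, trace_zero]
  rw [add_eq_zero_iff_of_nonneg (posSemidef_conjTranspose_mul_self _).trace_nonneg
    (posSemidef_conjTranspose_mul_self _).trace_nonneg] at hsum
  exact ⟨trace_conjTranspose_mul_self_eq_zero_iff.mp hsum.1,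
    trace_conjTranspose_mul_self_eq_zero_iff.mp hsum.2⟩

end Matrix

variable {n : ℕ}

lemma lap_eq_lie_lie (x y a : Matrix (Fin n) (Fin n) ℂ) :
    lap x y a = ⁅x, ⁅x, a⁆⁆ + ⁅y, ⁅y, a⁆⁆ := by
  simp only [lap, delta1, delta2, Ring.lie_def]
  noncomm_ring

lemma GenCond.exists_eq_smul_one {x y a : Matrix (Fin n) (Fin n) ℂ} (hgen : GenCond x y)
    (hxa : Commute x a) (hya : Commute y a) : ∃ z : ℂ, a = z • (1 : Matrix (Fin n) (Fin n) ℂ) :=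
  hgen a (hxa.symm.smul_right _).exp_right.eq (hya.symm.smul_right _).exp_right.eq

/-- The kernel of the Laplacian `Δ` consists exactly of the scalar multiples of the
identity matrix. -/
theorem ker_laplacian (n : ℕ) (x y : Matrix (Fin n) (Fin n) ℂ)
    (hx : x.IsHermitian) (hy : y.IsHermitian) (hgen : GenCond x y)
    (a : Matrix (Fin n) (Fin n) ℂ) :
    lap x y a = 0 ↔ ∃ z : ℂ, a = z • (1 : Matrix (Fin n) (Fin n) ℂ) := by
  rw [lap_eq_lie_lie]
  constructor
  · intro h
    obtain ⟨hxa, hya⟩ := (hx.lie_lie_add_lie_lie_eq_zero_iff hy a).mp h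
    exact hgen.exists_eq_smul_one (commute_iff_lie_eq.mpr hxa) (commute_iff_lie_eq.mpr hya)
  · rintro ⟨z, rfl⟩
    simp [Ring.lie_def]
end

section
/- Let w ∈ M_n(ℂ) be Hermitian and let δ(a) := wa − aw be the corresponding inner derivation. Let h ∈ M_n(ℂ) be Hermitian and positive semidefinite. Then for all integers p, q ≥ 0, the trace τ((δh) h^p (δh) h^q) is real and satisfies τ((δh) h^p (δh) h^q) ≤ 0. -/
/-!
The commutator `k = wh - hw` of two Hermitian matrices is skew-Hermitian, so the trace equals
`-τ((kᴴ hᵖ k) h^q)`. Both `kᴴ hᵖ k` and `h^q` are positive semidefinite, and the trace of a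
product of two positive semidefinite matrices is nonnegative: writing `B = Xᴴ X`, we get
`τ(A Xᴴ X) = τ(X A Xᴴ) ≥ 0`.
-/

open Matrix
open scoped ComplexOrder

namespace Matrix

variable {𝕜 n : Type*} [RCLike 𝕜] [Fintype n]

open scoped MatrixOrder in
theorem PosSemidef.trace_mul_nonneg {A B : Matrix n n 𝕜} (hA : A.PosSemidef)
    (hB : B.PosSemidef) : 0 ≤ (A * B).trace := by
  classical
  obtain ⟨X, rfl⟩ := CStarAlgebra.nonneg_iff_eq_star_mul_self.mp hB.nonneg
  rw [star_eq_conjTranspose, ← mul_assoc, trace_mul_comm]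
  simpa only [mul_assoc] using (hA.mul_mul_conjTranspose_same X).trace_nonneg

theorem IsHermitian.conjTranspose_commutator {w h : Matrix n n 𝕜} (hw : w.IsHermitian)
    (hh : h.IsHermitian) : (w * h - h * w)ᴴ = -(w * h - h * w) := by
  rw [conjTranspose_sub, conjTranspose_mul, conjTranspose_mul, hw.eq, hh.eq, neg_sub]

end Matrix

/-- For an inner derivation `δ(a) = wa − aw` with `w` Hermitian, and `h` Hermitian positive
semidefinite: `τ((δh) hᵖ (δh) h^q) ≤ 0` (real and nonpositive, phrased via the order on `ℂ`). -/
theorem trace_derivation_power_nonpos (n : ℕ) (w h : Matrix (Fin n) (Fin n) ℂ)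
    (hw : w.IsHermitian) (hh : h.PosSemidef) (p q : ℕ) :
    ((w * h - h * w) * h ^ p * (w * h - h * w) * h ^ q).trace ≤ 0 := by
  set k := w * h - h * w
  have hk : kᴴ = -k := hw.conjTranspose_commutator hh.isHermitian
  have hnonneg : 0 ≤ (kᴴ * h ^ p * k * h ^ q).trace :=
    ((hh.pow p).conjTranspose_mul_mul_same k).trace_mul_nonneg (hh.pow q)
  rwa [hk, neg_mul, neg_mul, neg_mul, trace_neg, neg_nonneg] at hnonneg
end

section
/- Let w ∈ M_n(ℂ) be Hermitian and let δ(a) := wa − aw be the corresponding inner derivation. Let h ∈ M_n(ℂ) be Hermitian and positive semidefinite. Then τ((δh)·δ(exp(h))) is real and satisfies τ((δh)·δ(exp(h))) ≤ 0. -/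
open Matrix Unitary
open scoped ComplexOrder

/-!
Diagonalise `h = U D U⋆` with `U` unitary. Conjugation by `U` preserves the trace, replaces `w`
by a Hermitian `v` and `exp h` by `exp D`, so the trace becomes
`-∑ i j, |v i j|² (d i - d j) (exp (d i) - exp (d j))`, which is nonpositive because `exp` is
monotone.
-/

namespace Matrix

variable {ι : Type*} [Fintype ι] [DecidableEq ι]

lemma mul_diagonal_sub_diagonal_mul_apply {α : Type*} [CommRing α] (v : Matrix ι ι α)
    (d : ι → α) (i j : ι) :
    (v * diagonal d - diagonal d * v) i j = v i j * (d j - d i) := by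
  simp only [sub_apply, mul_diagonal, diagonal_mul]
  ring

lemma IsHermitian.trace_commutator_diagonal_mul_commutator_diagonal {v : Matrix ι ι ℂ}
    (hv : v.IsHermitian) (d e : ι → ℝ) :
    ((v * diagonal (fun i ↦ (d i : ℂ)) - diagonal (fun i ↦ (d i : ℂ)) * v) *
      (v * diagonal (fun i ↦ (e i : ℂ)) - diagonal (fun i ↦ (e i : ℂ)) * v)).trace =
      -∑ i, ∑ j, ((Complex.normSq (v i j) * ((e i - e j) * (d i - d j)) : ℝ) : ℂ) := by
  simp only [trace, diag_apply, mul_apply, mul_diagonal_sub_diagonal_mul_apply,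
    ← Finset.sum_neg_distrib]
  refine Finset.sum_congr rfl fun i _ ↦ Finset.sum_congr rfl fun j _ ↦ ?_
  rw [← hv.apply j i, Complex.star_def, Complex.ofReal_mul, Complex.normSq_eq_conj_mul_self]
  push_cast
  ring

lemma IsHermitian.trace_commutator_diagonal_mul_commutator_diagonal_nonpos {v : Matrix ι ι ℂ}
    (hv : v.IsHermitian) {d e : ι → ℝ} (hde : Monovary e d) :
    ((v * diagonal (fun i ↦ (d i : ℂ)) - diagonal (fun i ↦ (d i : ℂ)) * v) *
      (v * diagonal (fun i ↦ (e i : ℂ)) - diagonal (fun i ↦ (e i : ℂ)) * v)).trace ≤ 0 := by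
  rw [hv.trace_commutator_diagonal_mul_commutator_diagonal, neg_nonpos]
  refine Finset.sum_nonneg fun i _ ↦ Finset.sum_nonneg fun j _ ↦ ?_
  exact_mod_cast mul_nonneg (Complex.normSq_nonneg _) (hde.sub_mul_sub_nonneg j i)

variable {𝕜 : Type*} [RCLike 𝕜]

lemma trace_conjStarAlgAut (u : unitary (Matrix ι ι 𝕜)) (x : Matrix ι ι 𝕜) :
    (conjStarAlgAut 𝕜 _ u x).trace = x.trace := by
  rw [conjStarAlgAut_apply, trace_mul_cycle, coe_star_mul_self, one_mul]

lemma exp_conjStarAlgAut (u : unitary (Matrix ι ι 𝕜)) (x : Matrix ι ι 𝕜) :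
    NormedSpace.exp (conjStarAlgAut 𝕜 _ u x) = conjStarAlgAut 𝕜 _ u (NormedSpace.exp x) := by
  have hu : (u : Matrix ι ι 𝕜)⁻¹ = star (u : Matrix ι ι 𝕜) :=
    inv_eq_right_inv (coe_mul_star_self u)
  rw [conjStarAlgAut_apply, conjStarAlgAut_apply, ← hu]
  exact exp_conj _ x isUnit_coe

lemma IsHermitian.cfc_real_exp {h : Matrix ι ι 𝕜} (hh : h.IsHermitian) :
    cfc Real.exp h = NormedSpace.exp h := by
  conv_rhs => rw [hh.spectral_theorem]
  rw [hh.cfc_eq, IsHermitian.cfc, exp_conjStarAlgAut, exp_diagonal]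
  congr 2
  ext i
  rw [Function.comp_apply, Function.comp_apply, Pi.coe_exp, Real.exp_eq_exp_ℝ,
    ← RCLike.algebraMap_eq_ofReal]
  exact NormedSpace.map_exp (algebraMap ℝ 𝕜) (continuous_algebraMap ℝ 𝕜) _

lemma IsHermitian.trace_commutator_mul_commutator_cfc_nonpos {w h : Matrix ι ι ℂ}
    (hw : w.IsHermitian) (hh : h.IsHermitian) {f : ℝ → ℝ} (hf : Monotone f) :
    ((w * h - h * w) * (w * cfc f h - cfc f h * w)).trace ≤ 0 := by
  set φ := conjStarAlgAut ℂ (Matrix ι ι ℂ) hh.eigenvectorUnitary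
  set v := φ.symm w
  set D : Matrix ι ι ℂ := diagonal fun i ↦ (hh.eigenvalues i : ℂ)
  set F : Matrix ι ι ℂ := diagonal fun i ↦ (f (hh.eigenvalues i) : ℂ)
  have hD : φ D = h := hh.spectral_theorem.symm
  have hF : φ F = cfc f h := (hh.cfc_eq f).symm
  have hv : v.IsHermitian := hw.isSelfAdjoint.map φ.symm
  calc ((w * h - h * w) * (w * cfc f h - cfc f h * w)).trace
      = ((φ v * φ D - φ D * φ v) * (φ v * φ F - φ F * φ v)).trace := by
        rw [hD, hF, φ.apply_symm_apply]
    _ = ((v * D - D * v) * (v * F - F * v)).trace := by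
        simp only [← map_mul, ← map_sub]
        exact trace_conjStarAlgAut _ _
    _ ≤ 0 := hv.trace_commutator_diagonal_mul_commutator_diagonal_nonpos
        ((monovary_self _).comp_monotone_left hf)

end Matrix

/-- For an inner derivation `δ(a) = wa − aw` with `w` Hermitian, and `h` Hermitian positive
semidefinite: `τ((δh)·δ(exp h)) ≤ 0` (real and nonpositive, phrased via the order on `ℂ`). -/
theorem trace_derivation_exp_nonpos (n : ℕ) (w h : Matrix (Fin n) (Fin n) ℂ)
    (hw : w.IsHermitian) (hh : h.PosSemidef) :
    ((w * h - h * w) * (w * NormedSpace.exp h - NormedSpace.exp h * w)).trace ≤ 0 := by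
  rw [← hh.isHermitian.cfc_real_exp]
  exact hw.trace_commutator_mul_commutator_cfc_nonpos hh.isHermitian Real.exp_monotone
end

section
/- Let I ⊆ ℝ be an open interval and let l : I → M_n(ℂ) be a continuously differentiable map whose values are Hermitian matrices. Then the function t ↦ τ(exp(l(t))) is differentiable on I and its derivative satisfies d/dt τ(exp(l(t))) = τ(exp(l(t))·l′(t)). -/
/-! Applied to a tracial functional `τ` (`τ (a * b) = τ (b * a)`), the noncommutative derivative
`h ↦ ∑ i < k, x ^ (k - 1 - i) * h * x ^ i` of `x ↦ x ^ k` collapses to `h ↦ k • τ (x ^ (k - 1) * h)`.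
Differentiating the exponential series termwise, which is legitimate because on every ball the
derivatives are dominated by a convergent exponential series, gives
`D (τ ∘ exp) x h = τ (exp x * h)`. The matrix statement is the chain rule with `τ = trace`. -/

open Matrix NormedSpace ContinuousLinearMap Nat

-- Not `norm_pow_le`: the norm of `1` need not be `1` (it is `0` for `0 × 0` matrices).
theorem norm_pow_le_norm_one_add {R : Type*} [SeminormedRing R] (a : R) (k : ℕ) :
    ‖a ^ k‖ ≤ ‖(1 : R)‖ + ‖a‖ ^ k := by
  rcases k.eq_zero_or_pos with rfl | hk
  · simp
  · exact (norm_pow_le' a hk).trans (le_add_of_nonneg_left (norm_nonneg _))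

section Tracial

variable {𝕂 𝔸 E : Type*} [NormedRing 𝔸] [NormedAddCommGroup E]

open scoped RightActions in
theorem hasFDerivAt_comp_pow_of_map_mul_comm [NontriviallyNormedField 𝕂] [NormedAlgebra 𝕂 𝔸]
    [NormedSpace 𝕂 E] {τ : 𝔸 →L[𝕂] E} (hτ : ∀ a b, τ (a * b) = τ (b * a)) (k : ℕ) (x : 𝔸) :
    HasFDerivAt (fun y => τ (y ^ (k + 1))) ((k + 1) • τ.comp (mul 𝕂 𝔸 (x ^ k))) x := by
  refine (τ.hasFDerivAt.comp x (hasFDerivAt_pow' (k + 1))).congr_fderiv ?_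
  ext h
  have hcyc : ∀ i ∈ Finset.range (k + 1), τ (x ^ (k - i) * h * x ^ i) = τ (x ^ k * h) := by
    intro i hi
    rw [hτ, ← mul_assoc, ← pow_add, Nat.add_sub_cancel' (Finset.mem_range_succ_iff.mp hi)]
  simpa [Finset.sum_apply, map_sum, mul_assoc] using Finset.sum_congr rfl hcyc

variable [CompleteSpace 𝔸]

theorem ContinuousLinearMap.hasSum_exp_series_succ [NontriviallyNormedField 𝕂] [CharZero 𝕂]
    [ContinuousSMul ℚ 𝕂] [NormedAlgebra 𝕂 𝔸] [NormedSpace 𝕂 E] (τ : 𝔸 →L[𝕂] E) (x : 𝔸) :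
    HasSum (fun k => ((k + 1)! : 𝕂)⁻¹ • τ (x ^ (k + 1))) (τ (exp x) - τ 1) := by
  have h := τ.hasSum (exp_series_hasSum_exp' (𝕂 := 𝕂) x)
  rw [← hasSum_nat_add_iff' 1] at h
  simpa using h

theorem hasFDerivAt_comp_exp_of_map_mul_comm [RCLike 𝕂] [NormedAlgebra 𝕂 𝔸] [NormedSpace 𝕂 E]
    [CompleteSpace E] {τ : 𝔸 →L[𝕂] E} (hτ : ∀ a b, τ (a * b) = τ (b * a)) (x : 𝔸) :
    HasFDerivAt (fun y => τ (exp y)) (τ.comp (mul 𝕂 𝔸 (exp x))) x := by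
  let : NormedSpace ℝ 𝔸 := NormedSpace.restrictScalars ℝ 𝕂 𝔸
  set f' : ℕ → 𝔸 → 𝔸 →L[𝕂] E := fun k y => (k ! : 𝕂)⁻¹ • τ.comp (mul 𝕂 𝔸 (y ^ k))
  set R := ‖x‖ + 1
  have hf : ∀ k y, y ∈ Metric.ball (0 : 𝔸) R →
      HasFDerivAt (fun y => ((k + 1)! : 𝕂)⁻¹ • τ (y ^ (k + 1))) (f' k y) y := by
    intro k y _
    refine ((hasFDerivAt_comp_pow_of_map_mul_comm hτ k y).const_smul _).congr_fderiv ?_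
    rw [← Nat.cast_smul_eq_nsmul 𝕂, smul_smul]
    congr 1
    rw [Nat.factorial_succ, Nat.cast_mul]
    field_simp
  have hf' : ∀ k y, y ∈ Metric.ball (0 : 𝔸) R →
      ‖f' k y‖ ≤ ‖τ‖ * ((‖(1 : 𝔸)‖ + R ^ k) / k !) := by
    intro k y hy
    have hyR : ‖y‖ ≤ R := (mem_ball_zero_iff.mp hy).le
    calc ‖f' k y‖ ≤ (k ! : ℝ)⁻¹ * (‖τ‖ * ‖y ^ k‖) := by
          rw [norm_smul, norm_inv, RCLike.norm_natCast]
          gcongr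
          exact (opNorm_comp_le _ _).trans (by gcongr; exact opNorm_mul_apply_le _ _ _)
      _ ≤ (k ! : ℝ)⁻¹ * (‖τ‖ * (‖(1 : 𝔸)‖ + R ^ k)) := by
          gcongr
          exact (norm_pow_le_norm_one_add y k).trans (by gcongr)
      _ = ‖τ‖ * ((‖(1 : 𝔸)‖ + R ^ k) / k !) := by ring
  have hu : Summable fun k => ‖τ‖ * ((‖(1 : 𝔸)‖ + R ^ k) / k !) := by
    have h1 : Summable fun k => ‖(1 : 𝔸)‖ / k ! := by
      simpa [div_eq_mul_inv] using (Real.summable_pow_div_factorial 1).mul_left ‖(1 : 𝔸)‖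
    simpa only [add_div] using (h1.add (Real.summable_pow_div_factorial R)).mul_left ‖τ‖
  have hder := hasFDerivAt_tsum_of_isPreconnected hu Metric.isOpen_ball
    (convex_ball _ _).isPreconnected hf hf' (Metric.mem_ball_self (by positivity))
    (τ.hasSum_exp_series_succ 0).summable (mem_ball_zero_iff.mpr (lt_add_one ‖x‖))
  have hsum' : HasSum (fun k => f' k x) (τ.comp (mul 𝕂 𝔸 (exp x))) := by
    let L := (compL 𝕂 𝔸 𝔸 E τ).comp (mul 𝕂 𝔸)
    simpa [L, f'] using L.hasSum (exp_series_hasSum_exp' (𝕂 := 𝕂) x)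
  have hfun : (fun y => τ (exp y)) = fun y => τ 1 + ∑' k, ((k + 1)! : 𝕂)⁻¹ • τ (y ^ (k + 1)) := by
    funext y
    rw [(τ.hasSum_exp_series_succ y).tsum_eq]
    abel
  rw [hfun, ← hsum'.tsum_eq]
  exact hder.const_add _

end Tracial

namespace Matrix

attribute [local instance] Matrix.linftyOpNormedAddCommGroup Matrix.linftyOpNormedSpace
  Matrix.linftyOpNormedRing Matrix.linftyOpNormedAlgebra

variable {m n : Type*} [Fintype m] [Fintype n] [DecidableEq m] [DecidableEq n]

theorem hasDerivAt_of_forall_hasDerivAt_apply {𝕜 α : Type*} [NontriviallyNormedField 𝕜]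
    [NormedField α] [NormedAlgebra 𝕜 α] {l : 𝕜 → Matrix m n α} {L : Matrix m n α} {t : 𝕜}
    (h : ∀ i j, HasDerivAt (fun s => l s i j) (L i j) t) : HasDerivAt l L t := by
  have hsum : ∀ A : Matrix m n α, A = ∑ i, ∑ j, A i j • single i j (1 : α) := fun A => by
    simpa [smul_single] using matrix_eq_sum_single A
  rw [show l = fun s => ∑ i, ∑ j, l s i j • single i j (1 : α) from funext fun s => hsum (l s),
    hsum L]
  exact HasDerivAt.fun_sum fun i _ => HasDerivAt.fun_sum fun j _ => (h i j).smul_const _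

theorem hasDerivAt_trace_exp_of_forall_hasDerivAt_apply {l : ℝ → Matrix m m ℂ}
    {L : Matrix m m ℂ} {t : ℝ} (h : ∀ i j, HasDerivAt (fun s => l s i j) (L i j) t) :
    HasDerivAt (fun s => (exp (l s)).trace) ((exp (l t) * L).trace) t := by
  let τ : Matrix m m ℂ →L[ℝ] ℂ := ⟨traceLinearMap m ℝ ℂ, continuous_id.matrix_trace⟩
  exact (hasFDerivAt_comp_exp_of_map_mul_comm (τ := τ) (fun a b => trace_mul_comm a b)
    (l t)).comp_hasDerivAt t (hasDerivAt_of_forall_hasDerivAt_apply h)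

end Matrix

theorem hasDerivAt_trace_exp_general (n : ℕ) (I : Set ℝ)
    (l l' : ℝ → Matrix (Fin n) (Fin n) ℂ)
    (hderiv : ∀ t ∈ I, ∀ i j, HasDerivAt (fun s => l s i j) (l' t i j) t) :
    ∀ t ∈ I, HasDerivAt (fun s => (NormedSpace.exp (l s)).trace)
      ((NormedSpace.exp (l t) * l' t).trace) t :=
  fun t ht => hasDerivAt_trace_exp_of_forall_hasDerivAt_apply (hderiv t ht)

/-- If `l` is a continuously differentiable Hermitian-matrix-valued map on an open interval
`I`, then `t ↦ τ(exp(l(t)))` is differentiable on `I` with derivative `τ(exp(l(t))·l′(t))`. -/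
theorem hasDerivAt_trace_exp (n : ℕ) (I : Set ℝ) (hIo : IsOpen I) (hIc : I.OrdConnected)
    (l l' : ℝ → Matrix (Fin n) (Fin n) ℂ)
    (hherm : ∀ t ∈ I, (l t).IsHermitian)
    (hderiv : ∀ t ∈ I, ∀ i j, HasDerivAt (fun s => l s i j) (l' t i j) t)
    (hcont : ContinuousOn l' I) :
    ∀ t ∈ I, HasDerivAt (fun s => (NormedSpace.exp (l s)).trace)
      ((NormedSpace.exp (l t) * l' t).trace) t :=
  hasDerivAt_trace_exp_general n I l l' hderiv
end
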